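/- Let S₁, S₂ ⊆ S with S₁ ∩ S₂ = {t}. Let W₁ ∈ Λ(S₁) be even or odd, and let W₂ ∈ Λ(S₂). Let β, γ ∈ ℂ, let a = Σ_{s ∈ S₁, s ≠ t} (β_s ∂_s + γ_s x_s) and b = Σ_{s ∈ S₂, s ≠ t} (β'_s ∂_s + γ'_s x_s) for some complex coefficients. Suppose (a + β ∂_t + γ x_t) W₁ = 0 and (b + β ∂_t − γ x_t) W₂ = 0. Then (a + b)(∂_t(W₁ W₂)) = 0; that is, the composed operator a + b, which involves no x_t and no ∂_t, annihilates the Berezin integral of the product W₁W₂ over the shared variable x_t. -/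
import Mathlib

noncomputable section

/-- The Grassmann (exterior) algebra `Λ(ℂ^S)` on generators indexed by `S`. -/
abbrev GS (S : Type) [Fintype S] [DecidableEq S] := ExteriorAlgebra ℂ (S → ℂ)

/-- `x_s` : left exterior multiplication by the generator `e_s`. -/
def XopS (S : Type) [Fintype S] [DecidableEq S] (s : S) : GS S →ₗ[ℂ] GS S :=
  LinearMap.mulLeft ℂ (ExteriorAlgebra.ι ℂ (Pi.single s 1))

/-- `∂_s` : left interior multiplication (contraction) with the dual basis vector of `e_s`. -/
def DopS (S : Type) [Fintype S] [DecidableEq S] (s : S) : GS S →ₗ[ℂ] GS S :=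
  CliffordAlgebra.contractLeft (LinearMap.proj s)

/-- `Λ(T)` : the subalgebra of `Λ(ℂ^S)` generated by the `e_s` with `s ∈ T`. -/
def GSub (S : Type) [Fintype S] [DecidableEq S] (T : Finset S) : Subalgebra ℂ (GS S) :=
  Algebra.adjoin ℂ ((fun s => ExteriorAlgebra.ι ℂ (Pi.single s 1)) '' ↑T)

/-- An element of `Λ(ℂ^S)` is even or odd, i.e. a sum of monomials of even degree or
a sum of monomials of odd degree. -/
def IsEvenOrOdd (S : Type) [Fintype S] [DecidableEq S] (w : GS S) : Prop :=
  w ∈ CliffordAlgebra.evenOdd (0 : QuadraticForm ℂ (S → ℂ)) 0 ∨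
  w ∈ CliffordAlgebra.evenOdd (0 : QuadraticForm ℂ (S → ℂ)) 1

open CliffordAlgebra

section Aux

variable {R : Type*} {M : Type*} [CommRing R] [AddCommGroup M] [Module R M]

/-- Twisted Leibniz rule for left contraction. -/
theorem myContract_mul {Q : QuadraticForm R M} (d : Module.Dual R M)
    (u v : CliffordAlgebra Q) :
    contractLeft d (u * v) =
      contractLeft d u * v + involute u * contractLeft d v := by
  induction u using CliffordAlgebra.induction generalizing v with
  | algebraMap r =>
      rw [contractLeft_algebraMap, zero_mul, zero_add, involute.commutes,
        contractLeft_algebraMap_mul]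
  | ι m =>
      rw [contractLeft_ι_mul, contractLeft_ι, involute_ι, Algebra.algebraMap_eq_smul_one,
        smul_mul_assoc, one_mul, neg_mul, sub_eq_add_neg]
  | mul u₁ u₂ h₁ h₂ =>
      rw [mul_assoc, h₁, h₂, h₁]
      simp only [map_mul, mul_add, add_mul, mul_assoc]
      abel
  | add u₁ u₂ h₁ h₂ =>
      rw [add_mul, map_add, h₁, h₂, map_add, add_mul, map_add, add_mul]
      abel

/-- In the exterior algebra, a generator (anti)commutes past any element via involute. -/
theorem myIota_mul_comm (m : M) (u : CliffordAlgebra (0 : QuadraticForm R M)) :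
    ι (0 : QuadraticForm R M) m * u = involute u * ι (0 : QuadraticForm R M) m := by
  induction u using CliffordAlgebra.induction with
  | algebraMap r => rw [involute.commutes, Algebra.commutes]
  | ι n =>
      have h := ι_mul_ι_add_swap (Q := (0 : QuadraticForm R M)) m n
      simp only [QuadraticMap.polar, QuadraticMap.zero_apply, sub_zero, sub_self,
        map_zero] at h
      rw [involute_ι, neg_mul, eq_neg_iff_add_eq_zero]
      exact h
  | mul u₁ u₂ h₁ h₂ => rw [map_mul, ← mul_assoc, h₁, mul_assoc, h₂, mul_assoc]
  | add u₁ u₂ h₁ h₂ => rw [map_add, mul_add, h₁, h₂, add_mul]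

/-- Contraction anticommutes with the grade involution. -/
theorem myInvolute_contract {Q : QuadraticForm R M} (d : Module.Dual R M)
    (u : CliffordAlgebra Q) :
    involute (contractLeft d u) = - contractLeft d (involute u) := by
  induction u using CliffordAlgebra.induction with
  | algebraMap r => rw [contractLeft_algebraMap, involute.commutes, contractLeft_algebraMap,
      map_zero, neg_zero]
  | ι m => rw [contractLeft_ι, involute.commutes, involute_ι, map_neg, contractLeft_ι, neg_neg]
  | mul u₁ u₂ h₁ h₂ =>
      rw [myContract_mul, map_add, map_mul, map_mul, h₁, h₂, map_mul, myContract_mul,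
        involute_involute, neg_add, neg_mul, mul_neg]
  | add u₁ u₂ h₁ h₂ => rw [map_add, map_add, h₁, h₂, map_add, map_add, neg_add]

end Aux

section AuxS

variable {S : Type} [Fintype S] [DecidableEq S]

theorem DopS_apply (s : S) (w : GS S) :
    DopS S s w = contractLeft (Q := (0 : QuadraticForm ℂ (S → ℂ))) (LinearMap.proj s) w := rfl

theorem XopS_apply (s : S) (w : GS S) :
    XopS S s w = ExteriorAlgebra.ι ℂ (Pi.single s 1) * w := rfl

theorem iotaS (r : S) : (ExteriorAlgebra.ι ℂ (Pi.single r 1) : GS S)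
    = ι (0 : QuadraticForm ℂ (S → ℂ)) (Pi.single r 1) := rfl

/-- Contraction in a variable not in `T` kills `Λ(T)`. -/
theorem DopS_eq_zero_of_mem {T : Finset S} {s : S} (hs : s ∉ T) {w : GS S}
    (hw : w ∈ GSub S T) : DopS S s w = 0 := by
  rw [DopS_apply]
  refine Algebra.adjoin_induction (hx := hw) ?_ ?_ ?_ ?_
  · rintro x ⟨r, hr, rfl⟩
    show contractLeft (LinearMap.proj s)
      (ι (0 : QuadraticForm ℂ (S → ℂ)) (Pi.single r 1)) = 0
    rw [contractLeft_ι]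
    have hsr : s ≠ r := by rintro rfl; exact hs (Finset.mem_coe.mp hr)
    have : (Pi.single r 1 : S → ℂ) s = 0 := Pi.single_eq_of_ne hsr 1
    simp [LinearMap.proj_apply, this]
  · intro r; exact contractLeft_algebraMap _ _ _
  · intro x y _ _ hx hy; rw [map_add, hx, hy, add_zero]
  · intro x y _ _ hx hy; rw [myContract_mul, hx, hy, zero_mul, mul_zero, add_zero]

variable {F : Finset S} (c1 c2 : S → ℂ)

/-- The operator passes through a right factor that it annihilates. -/
theorem opA (u v : GS S) (hv : ∀ s ∈ F, DopS S s v = 0) :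
    (∑ s ∈ F, (c1 s • DopS S s + c2 s • XopS S s)) (u * v) =
      ((∑ s ∈ F, (c1 s • DopS S s + c2 s • XopS S s)) u) * v := by
  rw [LinearMap.sum_apply, LinearMap.sum_apply, Finset.sum_mul]
  refine Finset.sum_congr rfl fun s hs => ?_
  simp only [LinearMap.add_apply, LinearMap.smul_apply, DopS_apply, XopS_apply]
  rw [myContract_mul, show contractLeft (LinearMap.proj s) v = 0 from hv s hs, mul_zero,
    add_zero, add_mul, smul_mul_assoc, smul_mul_assoc, mul_assoc]

/-- The operator passes a left factor that it annihilates, producing an involute. -/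
theorem opB (u v : GS S) (hu : ∀ s ∈ F, DopS S s u = 0) :
    (∑ s ∈ F, (c1 s • DopS S s + c2 s • XopS S s)) (u * v) =
      involute u * ((∑ s ∈ F, (c1 s • DopS S s + c2 s • XopS S s)) v) := by
  rw [LinearMap.sum_apply, LinearMap.sum_apply, Finset.mul_sum]
  refine Finset.sum_congr rfl fun s hs => ?_
  simp only [LinearMap.add_apply, LinearMap.smul_apply, DopS_apply, XopS_apply]
  rw [myContract_mul, show contractLeft (LinearMap.proj s) u = 0 from hu s hs, zero_mul,
    zero_add, iotaS,
    show ι (0 : QuadraticForm ℂ (S → ℂ)) (Pi.single s 1) * (u * v)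
        = involute u * (ι (0 : QuadraticForm ℂ (S → ℂ)) (Pi.single s 1) * v) from by
      rw [← mul_assoc, myIota_mul_comm (Pi.single s 1) u, mul_assoc], mul_add,
    mul_smul_comm, mul_smul_comm]

/-- The operator anticommutes with `∂_t` for `t` outside its support. -/
theorem opC {t : S} (ht : t ∉ F) (u : GS S) :
    DopS S t ((∑ s ∈ F, (c1 s • DopS S s + c2 s • XopS S s)) u) =
      -((∑ s ∈ F, (c1 s • DopS S s + c2 s • XopS S s)) (DopS S t u)) := by
  rw [LinearMap.sum_apply, LinearMap.sum_apply, map_sum, ← Finset.sum_neg_distrib]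
  refine Finset.sum_congr rfl fun s hs => ?_
  have hst : s ≠ t := fun h => ht (h ▸ hs)
  simp only [LinearMap.add_apply, LinearMap.smul_apply, DopS_apply, XopS_apply, iotaS]
  rw [map_add, map_smul, map_smul, contractLeft_comm, contractLeft_ι_mul]
  have h0 : (Pi.single s (1:ℂ) : S → ℂ) t = 0 := Pi.single_eq_of_ne hst.symm 1
  rw [show (LinearMap.proj t : (S → ℂ) →ₗ[ℂ] ℂ) (Pi.single s 1) = 0 from h0,
    zero_smul, zero_sub, neg_add, smul_neg, smul_neg]

end AuxS

section Main

variable {S : Type} [Fintype S] [DecidableEq S]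

set_option maxHeartbeats 2000000 in
theorem main_lemma
    (S₁ S₂ : Finset S) (t : S) (hint : S₁ ∩ S₂ = {t})
    (W₁ W₂ : GS S) (hW₁ : W₁ ∈ GSub S S₁) (hW₂ : W₂ ∈ GSub S S₂)
    (ε : ℂ) (hε : involute W₁ = ε • W₁) (hε2 : ε * ε = 1)
    (βc γc βc' γc' : S → ℂ) (β γ : ℂ)
    (a b : GS S →ₗ[ℂ] GS S)
    (ha : a = ∑ s ∈ S₁.erase t, (βc s • DopS S s + γc s • XopS S s))
    (hb : b = ∑ s ∈ S₂.erase t, (βc' s • DopS S s + γc' s • XopS S s))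
    (h₁ : (a + β • DopS S t + γ • XopS S t) W₁ = 0)
    (h₂ : (b + β • DopS S t - γ • XopS S t) W₂ = 0) :
    (a + b) (DopS S t (W₁ * W₂)) = 0 := by
  subst ha hb
  set et : GS S := ExteriorAlgebra.ι ℂ (Pi.single t 1) with het
  -- variables of one side don't see the other side
  have hs1 : ∀ s ∈ S₂.erase t, s ∉ S₁ := by
    intro s hs hmem
    obtain ⟨hst, hs2⟩ := Finset.mem_erase.mp hs
    exact hst (Finset.mem_singleton.mp (hint ▸ Finset.mem_inter.mpr ⟨hmem, hs2⟩))
  have hs2 : ∀ s ∈ S₁.erase t, s ∉ S₂ := by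
    intro s hs hmem
    obtain ⟨hst, hs1'⟩ := Finset.mem_erase.mp hs
    exact hst (Finset.mem_singleton.mp (hint ▸ Finset.mem_inter.mpr ⟨hs1', hmem⟩))
  have hd1 : ∀ s ∈ S₂.erase t, DopS S s W₁ = 0 :=
    fun s hs => DopS_eq_zero_of_mem (hs1 s hs) hW₁
  have hd2 : ∀ s ∈ S₁.erase t, DopS S s W₂ = 0 :=
    fun s hs => DopS_eq_zero_of_mem (hs2 s hs) hW₂
  have hd1' : ∀ s ∈ S₂.erase t, DopS S s (DopS S t W₁) = 0 := by
    intro s hs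
    rw [DopS_apply, DopS_apply, contractLeft_comm, ← DopS_apply, ← DopS_apply, hd1 s hs,
      map_zero, neg_zero]
  have hd2' : ∀ s ∈ S₁.erase t, DopS S s (DopS S t W₂) = 0 := by
    intro s hs
    rw [DopS_apply, DopS_apply, contractLeft_comm, ← DopS_apply, ← DopS_apply, hd2 s hs,
      map_zero, neg_zero]
  have hDD₁ : DopS S t (DopS S t W₁) = 0 := by
    rw [DopS_apply, DopS_apply]; exact contractLeft_contractLeft _ _
  have hDD₂ : DopS S t (DopS S t W₂) = 0 := by
    rw [DopS_apply, DopS_apply]; exact contractLeft_contractLeft _ _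
  have hDe : ∀ w : GS S, DopS S t (et * w) = w - et * DopS S t w := by
    intro w
    rw [DopS_apply, het, iotaS, contractLeft_ι_mul]
    have h1 : (Pi.single t (1:ℂ) : S → ℂ) t = 1 := Pi.single_eq_same t 1
    rw [show (LinearMap.proj t : (S → ℂ) →ₗ[ℂ] ℂ) (Pi.single t 1) = 1 from h1, one_smul,
      ← iotaS, ← het, DopS_apply]
  -- unpack the two annihilation hypotheses
  have haW₁ : (∑ s ∈ S₁.erase t, (βc s • DopS S s + γc s • XopS S s)) W₁
      = -(β • DopS S t W₁ + γ • (et * W₁)) := by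
    simp only [LinearMap.add_apply, LinearMap.smul_apply] at h₁
    rw [XopS_apply, ← het] at h₁
    rw [eq_neg_iff_add_eq_zero, ← add_assoc]
    exact h₁
  have hbW₂ : (∑ s ∈ S₂.erase t, (βc' s • DopS S s + γc' s • XopS S s)) W₂
      = -(β • DopS S t W₂ - γ • (et * W₂)) := by
    simp only [LinearMap.sub_apply, LinearMap.add_apply, LinearMap.smul_apply] at h₂
    rw [XopS_apply, ← het] at h₂
    rw [eq_neg_iff_add_eq_zero, ← add_sub_assoc]
    exact h₂
  -- apply ∂_t to the annihilation hypotheses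
  have haD : (∑ s ∈ S₁.erase t, (βc s • DopS S s + γc s • XopS S s)) (DopS S t W₁)
      = γ • W₁ - γ • (et * DopS S t W₁) := by
    have h := congrArg (DopS S t) haW₁
    rw [opC _ _ (Finset.notMem_erase t S₁), map_neg, map_add, map_smul, map_smul, hDD₁,
      smul_zero, zero_add, hDe, neg_inj] at h
    rw [h, smul_sub]
  have hbD : (∑ s ∈ S₂.erase t, (βc' s • DopS S s + γc' s • XopS S s)) (DopS S t W₂)
      = -(γ • W₂) + γ • (et * DopS S t W₂) := by
    have h := congrArg (DopS S t) hbW₂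
    rw [opC _ _ (Finset.notMem_erase t S₂), map_neg, map_sub, map_smul, map_smul, hDD₂,
      smul_zero, zero_sub, hDe, neg_inj] at h
    rw [h, smul_sub, neg_sub, sub_eq_neg_add]
  -- commutation facts
  have hinvD : involute (DopS S t W₁) = -ε • DopS S t W₁ := by
    rw [DopS_apply, myInvolute_contract, hε, map_smul, ← DopS_apply, neg_smul]
  have hcomm1 : et * W₁ = ε • (W₁ * et) := by
    rw [het, iotaS, myIota_mul_comm, hε, smul_mul_assoc, ← iotaS, ← het]
  have hcomm2 : DopS S t W₁ * et = -ε • (et * DopS S t W₁) := by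
    have h : et * DopS S t W₁ = -ε • (DopS S t W₁ * et) := by
      rw [het, iotaS, myIota_mul_comm, ← iotaS, ← het, hinvD, smul_mul_assoc]
    rw [h, smul_smul]
    have : -ε * -ε = (1:ℂ) := by linear_combination hε2
    rw [this, one_smul]
  -- split the contraction of the product
  have hsplit : DopS S t (W₁ * W₂) = DopS S t W₁ * W₂ + ε • (W₁ * DopS S t W₂) := by
    rw [DopS_apply, myContract_mul, hε, smul_mul_assoc, ← DopS_apply, ← DopS_apply]
  have e1 : (∑ s ∈ S₁.erase t, (βc s • DopS S s + γc s • XopS S s)) (DopS S t (W₁ * W₂))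
      = ((∑ s ∈ S₁.erase t, (βc s • DopS S s + γc s • XopS S s)) (DopS S t W₁)) * W₂
        + ε • (((∑ s ∈ S₁.erase t, (βc s • DopS S s + γc s • XopS S s)) W₁) * DopS S t W₂) := by
    rw [hsplit, map_add, map_smul, opA _ _ _ _ hd2, opA _ _ _ _ hd2']
  have e2 : (∑ s ∈ S₂.erase t, (βc' s • DopS S s + γc' s • XopS S s)) (DopS S t (W₁ * W₂))
      = (-ε) • (DopS S t W₁ *
          ((∑ s ∈ S₂.erase t, (βc' s • DopS S s + γc' s • XopS S s)) W₂))
        + ε • (ε • (W₁ *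
          ((∑ s ∈ S₂.erase t, (βc' s • DopS S s + γc' s • XopS S s)) (DopS S t W₂)))) := by
    rw [hsplit, map_add, map_smul, opB _ _ _ _ hd1', opB _ _ _ _ hd1, hinvD, hε,
      smul_mul_assoc, smul_mul_assoc]
  rw [LinearMap.add_apply, e1, e2, haD, haW₁, hbW₂, hbD, hcomm1]
  simp only [mul_sub, mul_add, mul_neg, neg_mul, sub_mul, add_mul, neg_add, smul_mul_assoc,
    mul_smul_comm, smul_add, smul_sub, smul_neg, neg_smul, smul_smul, neg_neg]
  rw [show DopS S t W₁ * (et * W₂) = -ε • (et * (DopS S t W₁ * W₂)) from by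
    rw [← mul_assoc, hcomm2, smul_mul_assoc, mul_assoc]]
  simp only [mul_assoc, smul_smul, smul_neg, neg_smul, neg_neg]
  match_scalars <;>
    first
      | ring1
      | linear_combination γ * hε2
      | linear_combination (-γ) * hε2
      | linear_combination ε * γ * hε2
      | linear_combination (-(ε * γ)) * hε2
      | linear_combination β * hε2
      | linear_combination (-β) * hε2
      | linear_combination ε * β * hε2
      | linear_combination (-(ε * β)) * hε2

theorem composed_operator_annihilates_berezin_integral
    (S : Type) [Fintype S] [DecidableEq S]
    (S₁ S₂ : Finset S) (t : S) (hint : S₁ ∩ S₂ = {t})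
    (W₁ W₂ : GS S) (hW₁ : W₁ ∈ GSub S S₁) (hW₂ : W₂ ∈ GSub S S₂)
    (hpar : IsEvenOrOdd S W₁)
    (βc γc βc' γc' : S → ℂ) (β γ : ℂ)
    (a b : GS S →ₗ[ℂ] GS S)
    (ha : a = ∑ s ∈ S₁.erase t, (βc s • DopS S s + γc s • XopS S s))
    (hb : b = ∑ s ∈ S₂.erase t, (βc' s • DopS S s + γc' s • XopS S s))
    (h₁ : (a + β • DopS S t + γ • XopS S t) W₁ = 0)
    (h₂ : (b + β • DopS S t - γ • XopS S t) W₂ = 0) :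
    (a + b) (DopS S t (W₁ * W₂)) = 0 := by
  rcases hpar with h | h
  · exact main_lemma S₁ S₂ t hint W₁ W₂ hW₁ hW₂ 1
      (by rw [involute_eq_of_mem_even h, one_smul]) (by ring)
      βc γc βc' γc' β γ a b ha hb h₁ h₂
  · exact main_lemma S₁ S₂ t hint W₁ W₂ hW₁ hW₂ (-1)
      (by rw [involute_eq_of_mem_odd h, neg_smul, one_smul]) (by ring)
      βc γc βc' γc' β γ a b ha hb h₁ h₂

end Main

end
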